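/- arXiv:2303.10547 — 3 statements merged into one kernel-verified Lean document; each statement's English description precedes it below -/
import Mathlib

section
/- Let γ ∈ (1/2, 1) and let a : [0,∞) → [0,∞) be a bounded, nonincreasing, measurable function such that lim_{t→∞} t^γ a(t) exists and equals some L > 0. Then for every μ > 0 and every p > 2, the function e^{-μ∫_0^t a(s)ds} is o(t^{-pγ/2}) as t → ∞; that is, lim_{t→∞} t^{pγ/2} · e^{-μ∫_0^t a(s)ds} = 0. -/
open MeasureTheory Filter Real

/-!
Since `t ^ γ * a t → L > 0`, eventually `a t ≥ (L / 2) t^(-γ)`, so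
`∫₀ᵗ a ≥ (L / (2 (1 - γ))) t^(1-γ) - C`. Hence `exp (-μ ∫₀ᵗ a)` decays like a stretched
exponential `exp (-b t^(1-γ))` with `b > 0`, which beats every power of `t`.
-/

theorem tendsto_rpow_mul_exp_neg_mul_rpow_atTop_nhds_zero (q b δ : ℝ) (hb : 0 < b)
    (hδ : 0 < δ) :
    Tendsto (fun t : ℝ => t ^ q * exp (-b * t ^ δ)) atTop (nhds 0) := by
  refine ((tendsto_rpow_mul_exp_neg_mul_atTop_nhds_zero (q / δ) b hb).comp
    (tendsto_rpow_atTop hδ)).congr' ?_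
  filter_upwards [eventually_ge_atTop (0:ℝ)] with t ht
  rw [Function.comp_apply, ← rpow_mul ht, mul_div_cancel₀ _ hδ.ne']

theorem tendsto_rpow_mul_exp_neg_of_rpow_le {f : ℝ → ℝ} (q b δ C : ℝ) (hb : 0 < b)
    (hδ : 0 < δ) (hf : ∀ᶠ t in atTop, b * t ^ δ + C ≤ f t) :
    Tendsto (fun t : ℝ => t ^ q * exp (-f t)) atTop (nhds 0) := by
  have hdom := (tendsto_rpow_mul_exp_neg_mul_rpow_atTop_nhds_zero q b δ hb hδ).const_mul
    (exp (-C))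
  rw [mul_zero] at hdom
  refine squeeze_zero' ?_ ?_ hdom
  · filter_upwards [eventually_ge_atTop (0:ℝ)] with t ht
    positivity
  · filter_upwards [hf, eventually_ge_atTop (0:ℝ)] with t hft ht
    calc t ^ q * exp (-f t) ≤ t ^ q * exp (-C + -b * t ^ δ) := by
          gcongr; linarith
      _ = exp (-C) * (t ^ q * exp (-b * t ^ δ)) := by rw [exp_add]; ring

theorem eventually_mul_rpow_neg_le_of_tendsto_rpow_mul {a : ℝ → ℝ} {γ L c : ℝ}
    (ha : Tendsto (fun t : ℝ => t ^ γ * a t) atTop (nhds L)) (hc : c < L) :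
    ∀ᶠ t in atTop, c * t ^ (-γ) ≤ a t := by
  filter_upwards [ha.eventually (eventually_ge_nhds hc), eventually_gt_atTop (0:ℝ)]
    with t hlt ht
  rw [rpow_neg ht.le, ← div_eq_mul_inv, div_le_iff₀ (rpow_pos_of_pos ht γ), mul_comm]
  exact hlt

theorem exists_mul_rpow_add_le_integral_of_mul_rpow_neg_le {a : ℝ → ℝ} {γ c : ℝ}
    (hγ : γ < 1) (ha_int : ∀ t ≥ (0:ℝ), IntervalIntegrable a volume 0 t)
    (ha : ∀ᶠ t in atTop, c * t ^ (-γ) ≤ a t) :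
    ∃ C, ∀ᶠ t in atTop, c / (1 - γ) * t ^ (1 - γ) + C ≤ ∫ s in (0:ℝ)..t, a s := by
  obtain ⟨T, hT⟩ := (ha.and (eventually_ge_atTop 0)).exists_forall_of_atTop
  have hT0 : 0 ≤ T := (hT T le_rfl).2
  refine ⟨(∫ s in (0:ℝ)..T, a s) - c / (1 - γ) * T ^ (1 - γ), ?_⟩
  filter_upwards [eventually_ge_atTop T] with t hTt
  have ha_Tt : IntervalIntegrable a volume T t :=
    (ha_int T hT0).symm.trans (ha_int t (hT0.trans hTt))
  have hpow_int : IntervalIntegrable (fun s : ℝ => c * s ^ (-γ)) volume T t :=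
    (intervalIntegral.intervalIntegrable_rpow' (by linarith)).const_mul c
  have hbound : c / (1 - γ) * (t ^ (1 - γ) - T ^ (1 - γ)) ≤ ∫ s in T..t, a s := by
    calc c / (1 - γ) * (t ^ (1 - γ) - T ^ (1 - γ)) = ∫ s in T..t, c * s ^ (-γ) := by
          rw [intervalIntegral.integral_const_mul, integral_rpow (Or.inl (by linarith)),
            neg_add_eq_sub, mul_div_assoc']
          ring
      _ ≤ ∫ s in T..t, a s :=
          intervalIntegral.integral_mono_on hTt hpow_int ha_Tt fun s hs => (hT s hs.1).1
  rw [← intervalIntegral.integral_add_adjacent_intervals (ha_int T hT0) ha_Tt]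
  linarith

theorem exp_neg_integral_isLittleO_general
    (γ : ℝ) (hγ : γ ∈ Set.Ioo (1/2 : ℝ) 1)
    (a : ℝ → ℝ)
    (ha_mono : AntitoneOn a (Set.Ici (0:ℝ)))
    (L : ℝ) (hL : 0 < L)
    (ha_lim : Tendsto (fun t : ℝ => t ^ γ * a t) atTop (nhds L))
    (μ : ℝ) (hμ : 0 < μ) (p : ℝ) :
    Tendsto (fun t : ℝ =>
      t ^ (p * γ / 2) * Real.exp (-μ * ∫ s in (0:ℝ)..t, a s)) atTop (nhds 0) := by
  have h1γ : 0 < 1 - γ := sub_pos.2 hγ.2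
  have ha_int : ∀ t ≥ (0:ℝ), IntervalIntegrable a volume 0 t := fun t ht =>
    (ha_mono.mono ((Set.uIcc_of_le ht).trans_subset Set.Icc_subset_Ici_self)).intervalIntegrable
  obtain ⟨C, hC⟩ := exists_mul_rpow_add_le_integral_of_mul_rpow_neg_le hγ.2 ha_int
    (eventually_mul_rpow_neg_le_of_tendsto_rpow_mul ha_lim (half_lt_self hL))
  have hb : 0 < μ * (L / 2 / (1 - γ)) := by positivity
  simpa only [neg_mul] using tendsto_rpow_mul_exp_neg_of_rpow_le (p * γ / 2) _ _ (μ * C) hb h1γ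
    (hC.mono fun t ht => by nlinarith)

/-- Lemma 2, first claim: under Assumption 2, `e^(-μ ∫₀ᵗ a) = o(t^(-pγ/2))`. -/
theorem exp_neg_integral_isLittleO
    (γ : ℝ) (hγ : γ ∈ Set.Ioo (1/2 : ℝ) 1)
    (a : ℝ → ℝ) (ha_nonneg : ∀ t ≥ (0:ℝ), 0 ≤ a t)
    (ha_bdd : ∃ M : ℝ, ∀ t ≥ (0:ℝ), a t ≤ M)
    (ha_mono : AntitoneOn a (Set.Ici (0:ℝ)))
    (ha_meas : Measurable a)
    (L : ℝ) (hL : 0 < L)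
    (ha_lim : Tendsto (fun t : ℝ => t ^ γ * a t) atTop (nhds L))
    (μ : ℝ) (hμ : 0 < μ) (p : ℝ) (hp : 2 < p) :
    Tendsto (fun t : ℝ =>
      t ^ (p * γ / 2) * Real.exp (-μ * ∫ s in (0:ℝ)..t, a s)) atTop (nhds 0) :=
  exp_neg_integral_isLittleO_general γ hγ a ha_mono L hL ha_lim μ hμ p
end

section
/- Let γ ∈ (1/2, 1) and let a : [0,∞) → [0,∞) be a bounded, nonincreasing, measurable function such that lim_{t→∞} t^γ a(t) exists and equals some L > 0. Then for every μ > 0 and every p > 2, lim_{t→∞} t^{pγ/2} · ∫_0^t a(s)^{(p+2)/2} · e^{-μ∫_s^t a(r)dr} ds = L^{p/2} / μ. -/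
open MeasureTheory Filter Real Set intervalIntegral
open scoped Topology

/-!
Extend `a` to an antitone function `b` on `ℝ`. The kernel integrates exactly,
`∫ₓᵗ b(s) e^{-μ ∫ₛᵗ b} ds = (1 - e^{-μ ∫ₓᵗ b}) / μ`, because the integrand is the right derivative
of `s ↦ e^{-μ ∫ₛᵗ b} / μ` off the countably many jumps of `b`. Writing `b^{p/2+1} = b^{p/2} · b`
and using that `b^{p/2}` is antitone, this gives for `F(t) = ∫₀ᵗ b^{p/2+1} e^{-μ ∫ₛᵗ b} ds`,
`k = γp/2` and `δ ∈ (0, 1)`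

  `t^k F(t) ≥ t^k b(t)^{p/2} (1 - e^{-μ ∫₀ᵗ b}) / μ`,
  `t^k F(t) ≤ δ b(0)^{p/2+1} t^{k+1} e^{-μ ∫_{δt}^t b} + t^k b(δt)^{p/2} / μ`,

the second by splitting at `δt`. Since `∫_{δt}^t b ≥ (1 - δ) t b(t) ≈ (1 - δ) L t^{1-γ}`, the
exponentials beat every power of `t`, so the bounds tend to `L^{p/2} / μ` and `δ^{-k} L^{p/2} / μ`;
then let `δ → 1`.
-/

theorem tendsto_of_tendsto_of_eventually_le_of_upper_family {α ι β : Type*}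
    [TopologicalSpace β] [LinearOrder β] [OrderTopology β] {F : Filter α} {G : Filter ι} [G.NeBot]
    {f lo : α → β} {up : ι → α → β} {g : ι → β} {l : β}
    (hlo : Tendsto lo F (𝓝 l)) (hlo_le : lo ≤ᶠ[F] f)
    (hup : ∀ᶠ i in G, Tendsto (up i) F (𝓝 (g i)) ∧ f ≤ᶠ[F] up i) (hg : Tendsto g G (𝓝 l)) :
    Tendsto f F (𝓝 l) := by
  refine tendsto_order.2 ⟨fun c hc => ?_, fun c hc => ?_⟩
  · filter_upwards [hlo.eventually (eventually_gt_nhds hc), hlo_le] with t h₁ h₂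
    exact h₁.trans_le h₂
  · obtain ⟨i, ⟨hi, hfi⟩, hgi⟩ := (hup.and (hg.eventually (eventually_lt_nhds hc))).exists
    filter_upwards [hfi, hi.eventually (eventually_lt_nhds hgi)] with t h₁ h₂
    exact h₁.trans_lt h₂

theorem tendsto_rpow_mul_exp_neg_mul_rpow_atTop_nhds_zero_s1 (m : ℝ) {c β : ℝ} (hc : 0 < c)
    (hβ : 0 < β) : Tendsto (fun t : ℝ => t ^ m * exp (-c * t ^ β)) atTop (𝓝 0) := by
  refine ((tendsto_rpow_mul_exp_neg_mul_atTop_nhds_zero (m / β) c hc).comp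
    (tendsto_rpow_atTop hβ)).congr' ?_
  filter_upwards [eventually_ge_atTop 0] with t ht
  rw [Function.comp_apply, ← rpow_mul ht, mul_div_cancel₀ m hβ.ne']

theorem tendsto_rpow_mul_comp_const_mul {f : ℝ → ℝ} {k l δ : ℝ}
    (hf : Tendsto (fun t => t ^ k * f t) atTop (𝓝 l)) (hδ : 0 < δ) :
    Tendsto (fun t => t ^ k * f (δ * t)) atTop (𝓝 (δ ^ (-k) * l)) := by
  refine ((hf.comp (tendsto_id.const_mul_atTop hδ)).const_mul (δ ^ (-k))).congr' ?_
  filter_upwards [eventually_ge_atTop 0] with t ht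
  rw [Function.comp_apply, id, mul_rpow hδ.le ht, rpow_neg hδ.le]
  field_simp [(rpow_pos_of_pos hδ k).ne']

theorem tendsto_rpow_mul_rpow_of_tendsto {b : ℝ → ℝ} {γ L : ℝ} (hb0 : ∀ s, 0 ≤ b s)
    (hL : 0 < L) (hlim : Tendsto (fun t => t ^ γ * b t) atTop (𝓝 L)) (e : ℝ) :
    Tendsto (fun t => t ^ (γ * e) * b t ^ e) atTop (𝓝 (L ^ e)) := by
  refine ((continuousAt_rpow_const L e (Or.inl hL.ne')).tendsto.comp hlim).congr' ?_
  filter_upwards [eventually_ge_atTop 0] with t ht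
  rw [Function.comp_apply, mul_rpow (rpow_nonneg ht γ) (hb0 t), rpow_mul ht]

theorem AntitoneOn.antitone_comp_max {α β : Type*} [LinearOrder α] [Preorder β]
    {f : α → β} {c : α} (hf : AntitoneOn f (Ici c)) : Antitone fun s => f (max s c) :=
  fun _ _ h => hf (le_max_right _ _) (le_max_right _ _) (max_le_max h le_rfl)

namespace Antitone

variable {b : ℝ → ℝ}

theorem rpow_const (hb : Antitone b) (hb0 : ∀ s, 0 ≤ b s) {q : ℝ} (hq : 0 ≤ q) :
    Antitone fun s => b s ^ q :=
  fun _ _ h => rpow_le_rpow (hb0 _) (hb h) hq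

theorem rightLim_ae_eq (hb : Antitone b) : Function.rightLim b =ᵐ[volume] b := by
  filter_upwards [hb.countable_not_continuousAt.ae_notMem volume] with u hu
  exact rightLim_eq_of_tendsto ((not_not.1 hu).tendsto.mono_left nhdsWithin_le_nhds)

theorem continuous_integral_left (hb : Antitone b) (t : ℝ) :
    Continuous fun s => ∫ r in s..t, b r := by
  simp only [integral_symm t]
  exact (continuous_primitive (fun _ _ => hb.intervalIntegrable) t).neg

theorem intervalIntegrable_mul_exp_neg_integral (hb : Antitone b) {f : ℝ → ℝ} (hf : Antitone f)
    (μ t x y : ℝ) :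
    IntervalIntegrable (fun s => f s * exp (-μ * ∫ r in s..t, b r)) volume x y :=
  hf.intervalIntegrable.mul_continuousOn
    (((hb.continuous_integral_left t).const_mul (-μ)).rexp.continuousOn)

theorem hasDerivWithinAt_exp_neg_integral_div (hb : Antitone b) {μ : ℝ} (hμ : μ ≠ 0)
    (t u : ℝ) :
    HasDerivWithinAt (fun v => exp (-μ * ∫ r in v..t, b r) / μ)
      (Function.rightLim b u * exp (-μ * ∫ r in u..t, b r)) (Ici u) u := by
  have hint :
      HasDerivWithinAt (fun v => ∫ r in v..t, b r) (-Function.rightLim b u) (Ici u) u :=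
    integral_hasDerivWithinAt_of_tendsto_ae_left hb.intervalIntegrable
      hb.measurable.stronglyMeasurable.stronglyMeasurableAtFilter
      ((hb.tendsto_rightLim u).mono_left inf_le_left)
  refine ((hint.const_mul (-μ)).exp.div_const μ).congr_deriv ?_
  field_simp

theorem integral_mul_exp_neg_integral (hb : Antitone b) {μ x t : ℝ} (hμ : μ ≠ 0)
    (hxt : x ≤ t) :
    ∫ s in x..t, b s * exp (-μ * ∫ r in s..t, b r)
      = (1 - exp (-μ * ∫ r in x..t, b r)) / μ := by
  have hftc := integral_eq_sub_of_hasDeriv_right_of_le hxt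
    (((hb.continuous_integral_left t).const_mul (-μ)).rexp.div_const μ).continuousOn
    (fun u _ => (hb.hasDerivWithinAt_exp_neg_integral_div hμ t u).mono Ioi_subset_Ici_self)
    (hb.rightLim.intervalIntegrable.mul_continuousOn
      ((hb.continuous_integral_left t).const_mul (-μ)).rexp.continuousOn)
  rw [integral_same, mul_zero, exp_zero] at hftc
  rw [sub_div, ← hftc]
  refine integral_congr_ae ?_
  filter_upwards [hb.rightLim_ae_eq] with u hu _
  rw [hu]

theorem sub_mul_le_integral (hb : Antitone b) {x t : ℝ} (hxt : x ≤ t) :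
    (t - x) * b t ≤ ∫ r in x..t, b r := by
  simpa using integral_mono_on hxt (intervalIntegrable_const (μ := volume))
    hb.intervalIntegrable fun r hr => hb hr.2

variable {μ e x t : ℝ}

theorem rpow_mul_le_integral_rpow_add_one_mul_exp (hb : Antitone b) (hb0 : ∀ s, 0 ≤ b s)
    (hμ : μ ≠ 0) (he : 0 ≤ e) (hxt : x ≤ t) :
    b t ^ e * ((1 - exp (-μ * ∫ r in x..t, b r)) / μ)
      ≤ ∫ s in x..t, b s ^ (e + 1) * exp (-μ * ∫ r in s..t, b r) := by
  rw [← hb.integral_mul_exp_neg_integral hμ hxt, ← intervalIntegral.integral_const_mul]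
  refine integral_mono_on hxt
    ((hb.intervalIntegrable_mul_exp_neg_integral hb _ _ _ _).const_mul _)
    (hb.intervalIntegrable_mul_exp_neg_integral (hb.rpow_const hb0 (by linarith)) _ _ _ _)
    fun s hs => ?_
  rw [rpow_add_one' (hb0 s) (by linarith), mul_assoc]
  exact mul_le_mul_of_nonneg_right (rpow_le_rpow (hb0 t) (hb hs.2) he)
    (mul_nonneg (hb0 s) (exp_pos _).le)

theorem integral_rpow_add_one_mul_exp_le (hb : Antitone b) (hb0 : ∀ s, 0 ≤ b s)
    (hμ : μ ≠ 0) (he : 0 ≤ e) (hxt : x ≤ t) :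
    ∫ s in x..t, b s ^ (e + 1) * exp (-μ * ∫ r in s..t, b r)
      ≤ b x ^ e * ((1 - exp (-μ * ∫ r in x..t, b r)) / μ) := by
  rw [← hb.integral_mul_exp_neg_integral hμ hxt, ← intervalIntegral.integral_const_mul]
  refine integral_mono_on hxt
    (hb.intervalIntegrable_mul_exp_neg_integral (hb.rpow_const hb0 (by linarith)) _ _ _ _)
    ((hb.intervalIntegrable_mul_exp_neg_integral hb _ _ _ _).const_mul _) fun s hs => ?_
  rw [rpow_add_one' (hb0 s) (by linarith), mul_assoc]
  exact mul_le_mul_of_nonneg_right (rpow_le_rpow (hb0 s) (hb hs.1) he)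
    (mul_nonneg (hb0 s) (exp_pos _).le)

theorem integral_rpow_mul_exp_le (hb : Antitone b) (hb0 : ∀ s, 0 ≤ b s) (hμ : 0 ≤ μ)
    {q : ℝ} (hq : 0 ≤ q) (hx : 0 ≤ x) :
    ∫ s in 0..x, b s ^ q * exp (-μ * ∫ r in s..t, b r)
      ≤ x * (b 0 ^ q * exp (-μ * ∫ r in x..t, b r)) := by
  calc ∫ s in 0..x, b s ^ q * exp (-μ * ∫ r in s..t, b r)
      ≤ ∫ _ in 0..x, b 0 ^ q * exp (-μ * ∫ r in x..t, b r) :=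
        integral_mono_on hx
          (hb.intervalIntegrable_mul_exp_neg_integral (hb.rpow_const hb0 hq) μ t 0 x)
          intervalIntegrable_const fun s hs => ?_
    _ = x * (b 0 ^ q * exp (-μ * ∫ r in x..t, b r)) := by
        rw [intervalIntegral.integral_const, smul_eq_mul, sub_zero]
  have hsplit : ∫ r in s..t, b r = (∫ r in s..x, b r) + ∫ r in x..t, b r :=
    (integral_add_adjacent_intervals hb.intervalIntegrable hb.intervalIntegrable).symm
  have hhead : 0 ≤ μ * ∫ r in s..x, b r := mul_nonneg hμ (integral_nonneg hs.2 fun r _ => hb0 r)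
  refine mul_le_mul (rpow_le_rpow (hb0 s) (hb hs.1) hq) (exp_le_exp.2 ?_) (exp_pos _).le
    (rpow_nonneg (hb0 0) q)
  rw [hsplit]
  linarith

theorem integral_rpow_add_one_mul_exp_le_add (hb : Antitone b) (hb0 : ∀ s, 0 ≤ b s)
    (hμ : 0 < μ) (he : 0 ≤ e) (hx : 0 ≤ x) (hxt : x ≤ t) :
    ∫ s in 0..t, b s ^ (e + 1) * exp (-μ * ∫ r in s..t, b r)
      ≤ x * (b 0 ^ (e + 1) * exp (-μ * ∫ r in x..t, b r)) + b x ^ e / μ := by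
  have he1 : 0 ≤ e + 1 := by linarith
  have hint := hb.intervalIntegrable_mul_exp_neg_integral (hb.rpow_const hb0 he1) μ t
  rw [← integral_add_adjacent_intervals (hint 0 x) (hint x t)]
  have hhead := hb.integral_rpow_mul_exp_le hb0 hμ.le he1 hx (t := t)
  have htail := hb.integral_rpow_add_one_mul_exp_le hb0 hμ.ne' he hxt
  have hdrop : b x ^ e * ((1 - exp (-μ * ∫ r in x..t, b r)) / μ) ≤ b x ^ e / μ := by
    have hE := exp_pos (-μ * ∫ r in x..t, b r)
    rw [← mul_one_div (b x ^ e)]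
    exact mul_le_mul_of_nonneg_left (div_le_div_of_nonneg_right (by linarith) hμ.le)
      (rpow_nonneg (hb0 x) e)
  linarith

theorem tendsto_rpow_mul_exp_neg_integral (hb : Antitone b) {γ L δ : ℝ} (hγ : γ < 1)
    (hL : 0 < L) (hlim : Tendsto (fun t => t ^ γ * b t) atTop (𝓝 L)) (hμ : 0 < μ) (hδ : δ < 1)
    (m : ℝ) : Tendsto (fun t => t ^ m * exp (-μ * ∫ r in δ * t..t, b r)) atTop (𝓝 0) := by
  have hc : 0 < μ * ((1 - δ) * (L / 2)) := mul_pos hμ (mul_pos (by linarith) (by linarith))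
  refine squeeze_zero' ?_ ?_
    (tendsto_rpow_mul_exp_neg_mul_rpow_atTop_nhds_zero_s1 m hc (sub_pos.2 hγ))
  · filter_upwards [eventually_ge_atTop 0] with t ht
    exact mul_nonneg (rpow_nonneg ht m) (exp_pos _).le
  filter_upwards [eventually_gt_atTop 0, hlim.eventually (eventually_ge_nhds (half_lt_self hL))]
    with t ht hLt
  have hint : (1 - δ) * (L / 2) * t ^ (1 - γ) ≤ ∫ r in δ * t..t, b r :=
    calc (1 - δ) * (L / 2) * t ^ (1 - γ)
        ≤ (1 - δ) * t ^ (1 - γ) * (t ^ γ * b t) := by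
          rw [mul_right_comm]
          exact mul_le_mul_of_nonneg_left hLt (mul_nonneg (by linarith) (rpow_nonneg ht.le _))
      _ = (t - δ * t) * b t := by
          rw [← mul_assoc, mul_assoc _ (t ^ (1 - γ)), ← rpow_add ht, sub_add_cancel, rpow_one]
          ring
      _ ≤ ∫ r in δ * t..t, b r := hb.sub_mul_le_integral (by nlinarith)
  refine mul_le_mul_of_nonneg_left (exp_le_exp.2 ?_) (rpow_nonneg ht.le m)
  nlinarith [mul_le_mul_of_nonneg_left hint hμ.le]

theorem tendsto_rpow_mul_integral_rpow_add_one_mul_exp (hb : Antitone b) (hb0 : ∀ s, 0 ≤ b s)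
    {γ L : ℝ} (hγ : γ < 1) (hL : 0 < L) (hlim : Tendsto (fun t => t ^ γ * b t) atTop (𝓝 L))
    (hμ : 0 < μ) (he : 0 ≤ e) :
    Tendsto (fun t => t ^ (γ * e) * ∫ s in 0..t, b s ^ (e + 1) * exp (-μ * ∫ r in s..t, b r))
      atTop (𝓝 (L ^ e / μ)) := by
  set k := γ * e
  have hk : Tendsto (fun t => t ^ k * b t ^ e) atTop (𝓝 (L ^ e)) :=
    tendsto_rpow_mul_rpow_of_tendsto hb0 hL hlim e
  have hexp : Tendsto (fun t => exp (-μ * ∫ r in 0..t, b r)) atTop (𝓝 0) := by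
    simpa using hb.tendsto_rpow_mul_exp_neg_integral hγ hL hlim hμ zero_lt_one 0
  refine tendsto_of_tendsto_of_eventually_le_of_upper_family (G := 𝓝[<] (1 : ℝ))
    (lo := fun t => t ^ k * b t ^ e * ((1 - exp (-μ * ∫ r in 0..t, b r)) / μ))
    (up := fun δ t => δ * b 0 ^ (e + 1) * (t ^ (k + 1) * exp (-μ * ∫ r in δ * t..t, b r))
      + t ^ k * b (δ * t) ^ e / μ)
    (g := fun δ => δ ^ (-k) * L ^ e / μ) ?_ ?_ ?_ ?_
  · simpa [div_eq_mul_inv] using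
      hk.mul (((tendsto_const_nhds (x := (1 : ℝ))).sub hexp).div_const μ)
  · filter_upwards [eventually_ge_atTop 0] with t ht
    rw [mul_assoc]
    exact mul_le_mul_of_nonneg_left
      (hb.rpow_mul_le_integral_rpow_add_one_mul_exp hb0 hμ.ne' he ht) (rpow_nonneg ht k)
  · filter_upwards [Ioo_mem_nhdsLT zero_lt_one] with δ hδ
    refine ⟨?_, ?_⟩
    · simpa using ((hb.tendsto_rpow_mul_exp_neg_integral hγ hL hlim hμ hδ.2 (k + 1)).const_mul
        (δ * b 0 ^ (e + 1))).add ((tendsto_rpow_mul_comp_const_mul hk hδ.1).div_const μ)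
    · filter_upwards [eventually_gt_atTop 0] with t ht
      calc t ^ k * ∫ s in 0..t, b s ^ (e + 1) * exp (-μ * ∫ r in s..t, b r)
          ≤ t ^ k * (δ * t * (b 0 ^ (e + 1) * exp (-μ * ∫ r in δ * t..t, b r))
            + b (δ * t) ^ e / μ) :=
            mul_le_mul_of_nonneg_left (hb.integral_rpow_add_one_mul_exp_le_add hb0 hμ he
              (mul_pos hδ.1 ht).le (by nlinarith [hδ.2])) (rpow_nonneg ht.le k)
        _ = _ := by rw [rpow_add_one ht.ne']; ring
  · have hcont : ContinuousAt (fun δ : ℝ => δ ^ (-k) * L ^ e / μ) 1 :=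
      ((continuousAt_rpow_const 1 (-k) (Or.inl one_ne_zero)).mul
        continuousAt_const).div_const μ
    simpa using hcont.tendsto.mono_left nhdsWithin_le_nhds

end Antitone

theorem integral_rpow_mul_exp_neg_integral_congr {a b : ℝ → ℝ} (hab : EqOn a b (Ici 0))
    {q μ t : ℝ} (ht : 0 ≤ t) :
    ∫ s in 0..t, a s ^ q * exp (-μ * ∫ r in s..t, a r)
      = ∫ s in 0..t, b s ^ q * exp (-μ * ∫ r in s..t, b r) := by
  refine integral_congr fun s hs => ?_
  rw [uIcc_of_le ht] at hs
  have hst : EqOn a b (uIcc s t) := fun r hr => hab (hs.1.trans (uIcc_of_le hs.2 ▸ hr).1)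
  rw [hab hs.1, integral_congr hst]

theorem lim_weighted_integral_general
    (γ : ℝ) (hγ : γ ∈ Set.Ioo (1/2 : ℝ) 1)
    (a : ℝ → ℝ) (ha_nonneg : ∀ t ≥ (0:ℝ), 0 ≤ a t)
    (ha_mono : AntitoneOn a (Set.Ici (0:ℝ)))
    (L : ℝ) (hL : 0 < L)
    (ha_lim : Tendsto (fun t : ℝ => t ^ γ * a t) atTop (nhds L))
    (μ : ℝ) (hμ : 0 < μ) (p : ℝ) (hp : 2 < p) :
    Tendsto (fun t : ℝ =>
      t ^ (p * γ / 2) *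
        ∫ s in (0:ℝ)..t, (a s) ^ ((p + 2) / 2) * Real.exp (-μ * ∫ r in s..t, a r))
      atTop (nhds (L ^ (p / 2) / μ)) := by
  set b : ℝ → ℝ := fun s => a (max s 0)
  have hab : EqOn a b (Ici 0) := fun s hs => by simp [b, max_eq_left (mem_Ici.1 hs)]
  have hbL : Tendsto (fun t => t ^ γ * b t) atTop (𝓝 L) := by
    refine ha_lim.congr' ?_
    filter_upwards [eventually_ge_atTop 0] with t ht
    rw [hab ht]
  have hbF := ha_mono.antitone_comp_max.tendsto_rpow_mul_integral_rpow_add_one_mul_exp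
    (fun s => ha_nonneg _ (le_max_right s 0)) hγ.2 hL hbL hμ (e := p / 2) (by linarith)
  rw [show p * γ / 2 = γ * (p / 2) by ring, show (p + 2) / 2 = p / 2 + 1 by ring]
  refine hbF.congr' ?_
  filter_upwards [eventually_ge_atTop 0] with t ht
  rw [integral_rpow_mul_exp_neg_integral_congr hab ht]

/-- Lemma 2, second claim: under Assumption 2,
`lim_{t→∞} t^(pγ/2) ∫₀ᵗ a(s)^((p+2)/2) e^(-μ ∫ₛᵗ a) ds = L^(p/2)/μ`. -/
theorem lim_weighted_integral
    (γ : ℝ) (hγ : γ ∈ Set.Ioo (1/2 : ℝ) 1)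
    (a : ℝ → ℝ) (ha_nonneg : ∀ t ≥ (0:ℝ), 0 ≤ a t)
    (ha_bdd : ∃ M : ℝ, ∀ t ≥ (0:ℝ), a t ≤ M)
    (ha_mono : AntitoneOn a (Set.Ici (0:ℝ)))
    (ha_meas : Measurable a)
    (L : ℝ) (hL : 0 < L)
    (ha_lim : Tendsto (fun t : ℝ => t ^ γ * a t) atTop (nhds L))
    (μ : ℝ) (hμ : 0 < μ) (p : ℝ) (hp : 2 < p) :
    Tendsto (fun t : ℝ =>
      t ^ (p * γ / 2) *
        ∫ s in (0:ℝ)..t, (a s) ^ ((p + 2) / 2) * Real.exp (-μ * ∫ r in s..t, a r))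
      atTop (nhds (L ^ (p / 2) / μ)) :=
  lim_weighted_integral_general γ hγ a ha_nonneg ha_mono L hL ha_lim μ hμ p hp
end

section
/- Let γ ∈ (1/2, 1) and let a : [0,∞) → [0,∞) be a bounded, nonincreasing, measurable function such that lim_{t→∞} t^γ a(t) exists and equals some L > 0. Let p > 2, C₀ > 0, C₁ ≥ 0, and let f : [0,∞) → [0,∞) satisfy, for every t ≥ 0, f(t) ≤ e^{-C₀∫_0^t a(s)ds} · f(0) + C₁ ∫_0^t a(s)^{(p+2)/2} · e^{-C₀∫_s^t a(r)dr} ds. Then there exists a constant C ≥ 0 such that f(t) ≤ C · t^{-pγ/2} for all t ≥ 1; in particular, lim_{t→∞} f(t) = 0. -/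
/-!
Write `q = (p + 2) / 2`. Since `a t ≍ t ^ (-γ)`, split the convolution integral at `t / 2`.
On `[0, t / 2]` the kernel carries the factor `exp (-C₀ ∫_{t/2}^t a) ≤ exp (-C₀ a(t) t / 2)`,
which decays like `exp (-c t ^ (1 - γ))`, faster than any power of `t`. On `[t / 2, t]` we use
`a(s) ^ q ≤ a(t / 2) ^ q` and `∫_s^t a ≥ a(t) (t - s)`, so this piece is at most
`a(t / 2) ^ q / (C₀ a(t)) = O(t ^ (γ - γ q)) = O(t ^ (-p γ / 2))`. On bounded intervals `f` is
controlled by the crude bound `f t ≤ f 0 + C₁ t a(0) ^ q`.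
-/

open MeasureTheory Filter Real Set Asymptotics Topology

theorem AntitoneOn.mul_sub_le_intervalIntegral {a : ℝ → ℝ} {s t : ℝ}
    (ha : AntitoneOn a (Icc s t)) (hst : s ≤ t) : a t * (t - s) ≤ ∫ r in s..t, a r := by
  have hint : IntervalIntegrable a volume s t := (uIcc_of_le hst ▸ ha).intervalIntegrable
  calc a t * (t - s) = ∫ _ in s..t, a t := by simp [mul_comm]
    _ ≤ ∫ r in s..t, a r := intervalIntegral.integral_mono_on hst intervalIntegrable_const hint
        fun r hr => ha hr (right_mem_Icc.2 hst) hr.2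

theorem integral_exp_neg_mul_sub_le {k : ℝ} (hk : 0 < k) (s t : ℝ) :
    ∫ u in s..t, exp (-k * (t - u)) ≤ k⁻¹ := by
  have hderiv : ∀ u, HasDerivAt (fun u => exp (-k * (t - u)) / k) (exp (-k * (t - u))) u :=
    fun u => (((hasDerivAt_id u).const_sub t).const_mul (-k)).exp.div_const k |>.congr_deriv
      (by field_simp; simp)
  rw [intervalIntegral.integral_eq_sub_of_hasDerivAt (fun u _ => hderiv u)
    (by apply Continuous.intervalIntegrable; fun_prop)]
  simp only [sub_self, mul_zero, exp_zero]
  linarith [div_pos (exp_pos (-k * (t - s))) hk, one_div k]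

section Kernel

variable {a : ℝ → ℝ} {C₀ q : ℝ}

theorem intervalIntegrable_rpow_mul_exp_neg_integral (ha_nonneg : ∀ t ≥ (0:ℝ), 0 ≤ a t)
    (ha_mono : AntitoneOn a (Ici 0)) (hq : 0 ≤ q) {t : ℝ} (ht : 0 ≤ t) :
    IntervalIntegrable (fun s => a s ^ q * exp (-C₀ * ∫ r in s..t, a r)) volume 0 t := by
  have hmono : AntitoneOn a (uIcc 0 t) :=
    ha_mono.mono (by simp [uIcc_of_le ht, Icc_subset_Ici_self])
  have hpow : AntitoneOn (fun s => a s ^ q) (uIcc 0 t) := fun x hx y hy hxy =>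
    rpow_le_rpow (ha_nonneg y (by simp_all)) (hmono hx hy hxy) hq
  refine hpow.intervalIntegrable.mul_continuousOn ?_
  have := intervalIntegral.continuousOn_primitive_interval_left
    (hmono.integrableOn_isCompact (μ := volume) isCompact_uIcc)
  exact (continuousOn_const.mul this).rexp

theorem integral_rpow_mul_exp_neg_integral_le_head (ha_nonneg : ∀ t ≥ (0:ℝ), 0 ≤ a t)
    (ha_mono : AntitoneOn a (Ici 0)) (hC₀ : 0 ≤ C₀) (hq : 0 ≤ q) {u t : ℝ} (hu : 0 ≤ u)
    (hut : u ≤ t) :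
    ∫ s in 0..u, a s ^ q * exp (-C₀ * ∫ r in s..t, a r) ≤
      u * (a 0 ^ q * exp (-C₀ * ∫ r in u..t, a r)) := by
  have hint := intervalIntegrable_rpow_mul_exp_neg_integral ha_nonneg ha_mono hq (C₀ := C₀)
    (hu.trans hut)
  have hle : ∀ s ∈ Icc 0 u, a s ^ q * exp (-C₀ * ∫ r in s..t, a r) ≤
      a 0 ^ q * exp (-C₀ * ∫ r in u..t, a r) := by
    rintro s ⟨hs, hsu⟩
    have hint_le : ∫ r in u..t, a r ≤ ∫ r in s..t, a r :=
      intervalIntegral.integral_mono_interval hsu hut le_rfl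
        ((ae_restrict_mem measurableSet_Ioc).mono fun r hr => ha_nonneg r (hs.trans hr.1.le))
        (ha_mono.mono (uIcc_of_le (hsu.trans hut) ▸ fun r hr => hs.trans hr.1)).intervalIntegrable
    exact mul_le_mul (rpow_le_rpow (ha_nonneg s hs) (ha_mono self_mem_Ici hs hs) hq)
      (exp_le_exp.2 (mul_le_mul_of_nonpos_left hint_le (neg_nonpos.2 hC₀))) (exp_pos _).le
      (rpow_nonneg (ha_nonneg 0 le_rfl) q)
  calc ∫ s in 0..u, a s ^ q * exp (-C₀ * ∫ r in s..t, a r)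
      ≤ ∫ _ in 0..u, a 0 ^ q * exp (-C₀ * ∫ r in u..t, a r) :=
        intervalIntegral.integral_mono_on hu (hint.mono_set (by
          rw [uIcc_of_le hu, uIcc_of_le (hu.trans hut)]; exact Icc_subset_Icc_right hut))
          intervalIntegrable_const hle
    _ = u * (a 0 ^ q * exp (-C₀ * ∫ r in u..t, a r)) := by simp [mul_left_comm]

theorem integral_rpow_mul_exp_neg_integral_le_tail (ha_nonneg : ∀ t ≥ (0:ℝ), 0 ≤ a t)
    (ha_mono : AntitoneOn a (Ici 0)) (hC₀ : 0 < C₀) (hq : 0 ≤ q) {u t : ℝ} (hu : 0 ≤ u)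
    (hut : u ≤ t) (hat : 0 < a t) :
    ∫ s in u..t, a s ^ q * exp (-C₀ * ∫ r in s..t, a r) ≤ a u ^ q / (C₀ * a t) := by
  have hint := (intervalIntegrable_rpow_mul_exp_neg_integral ha_nonneg ha_mono hq (C₀ := C₀)
    (hu.trans hut)).mono_set (by
      rw [uIcc_of_le hut, uIcc_of_le (hu.trans hut)]; exact Icc_subset_Icc_left hu)
  have hle : ∀ s ∈ Icc u t, a s ^ q * exp (-C₀ * ∫ r in s..t, a r) ≤
      a u ^ q * exp (-(C₀ * a t) * (t - s)) := by
    rintro s ⟨hus, hst⟩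
    have hs : 0 ≤ s := hu.trans hus
    have hint_ge : a t * (t - s) ≤ ∫ r in s..t, a r :=
      (ha_mono.mono fun r hr => hs.trans hr.1).mul_sub_le_intervalIntegral hst
    refine mul_le_mul (rpow_le_rpow (ha_nonneg s hs) (ha_mono hu hs hus) hq)
      (exp_le_exp.2 ?_) (exp_pos _).le (rpow_nonneg (ha_nonneg u hu) q)
    nlinarith
  calc ∫ s in u..t, a s ^ q * exp (-C₀ * ∫ r in s..t, a r)
      ≤ ∫ s in u..t, a u ^ q * exp (-(C₀ * a t) * (t - s)) :=
        intervalIntegral.integral_mono_on hut hint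
          (by apply Continuous.intervalIntegrable; fun_prop) hle
    _ = a u ^ q * ∫ s in u..t, exp (-(C₀ * a t) * (t - s)) :=
        intervalIntegral.integral_const_mul _ _
    _ ≤ a u ^ q * (C₀ * a t)⁻¹ :=
        mul_le_mul_of_nonneg_left (integral_exp_neg_mul_sub_le (by positivity) u t)
          (rpow_nonneg (ha_nonneg u hu) q)
    _ = a u ^ q / (C₀ * a t) := (div_eq_mul_inv _ _).symm

theorem integral_rpow_mul_exp_neg_integral_le (ha_nonneg : ∀ t ≥ (0:ℝ), 0 ≤ a t)
    (ha_mono : AntitoneOn a (Ici 0)) (hC₀ : 0 < C₀) (hq : 0 ≤ q) {t : ℝ} (ht : 0 ≤ t)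
    (hat : 0 < a t) :
    ∫ s in 0..t, a s ^ q * exp (-C₀ * ∫ r in s..t, a r) ≤
      t / 2 * a 0 ^ q * exp (-(C₀ / 2) * (a t * t)) + a (t / 2) ^ q / (C₀ * a t) := by
  have hint := intervalIntegrable_rpow_mul_exp_neg_integral ha_nonneg ha_mono hq (C₀ := C₀) ht
  have hhalf : 0 ≤ t / 2 := by linarith
  rw [← intervalIntegral.integral_add_adjacent_intervals (b := t / 2)
    (hint.mono_set (by simp [uIcc_of_le, ht, hhalf, Icc_subset_Icc_right]))
    (hint.mono_set (by simp [uIcc_of_le, ht, hhalf, Icc_subset_Icc_left]))]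
  refine add_le_add ?_ (integral_rpow_mul_exp_neg_integral_le_tail ha_nonneg ha_mono hC₀ hq hhalf
    (by linarith) hat)
  have hint_ge : a t * (t - t / 2) ≤ ∫ r in t / 2..t, a r :=
    (ha_mono.mono fun r hr => hhalf.trans hr.1).mul_sub_le_intervalIntegral (by linarith)
  calc _ ≤ t / 2 * (a 0 ^ q * exp (-C₀ * ∫ r in t / 2..t, a r)) :=
        integral_rpow_mul_exp_neg_integral_le_head ha_nonneg ha_mono hC₀.le hq hhalf (by linarith)
    _ ≤ t / 2 * (a 0 ^ q * exp (-(C₀ / 2) * (a t * t))) := by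
        gcongr t / 2 * (_ * exp ?_)
        · exact rpow_nonneg (ha_nonneg 0 le_rfl) q
        · nlinarith
    _ = t / 2 * a 0 ^ q * exp (-(C₀ / 2) * (a t * t)) := by ring

end Kernel

theorem isLittleO_exp_neg_mul_rpow_rpow {b δ : ℝ} (hb : 0 < b) (hδ : 0 < δ) (s : ℝ) :
    (fun t => exp (-b * t ^ δ)) =o[atTop] fun t => t ^ s := by
  refine ((isLittleO_exp_neg_mul_rpow_atTop hb (s / δ)).comp_tendsto
    (tendsto_rpow_atTop hδ)).congr' .rfl ?_
  filter_upwards [eventually_ge_atTop 0] with t ht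
  simp [← rpow_mul ht, mul_div_cancel₀ _ hδ.ne']

section Asymptotics

variable {a : ℝ → ℝ} {γ L : ℝ}

theorem isBigO_rpow_neg_of_tendsto_rpow_mul (h : Tendsto (fun t => t ^ γ * a t) atTop (𝓝 L)) :
    a =O[atTop] fun t => t ^ (-γ) := by
  refine (((isBigO_refl (fun t => t ^ (-γ)) atTop).mul (h.isBigO_one ℝ)).congr' ?_ ?_)
  · filter_upwards [eventually_gt_atTop 0] with t ht
    rw [rpow_neg ht.le, inv_mul_cancel_left₀ (rpow_pos_of_pos ht γ).ne']
  · simp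

theorem isBigO_inv_rpow_of_tendsto_rpow_mul (h : Tendsto (fun t => t ^ γ * a t) atTop (𝓝 L))
    (hL : L ≠ 0) : (fun t => (a t)⁻¹) =O[atTop] fun t => t ^ γ := by
  refine (((isBigO_refl (fun t => t ^ γ) atTop).mul ((h.inv₀ hL).isBigO_one ℝ)).congr' ?_ ?_)
  · filter_upwards [eventually_gt_atTop 0] with t ht
    rw [mul_inv, mul_inv_cancel_left₀ (rpow_pos_of_pos ht γ).ne']
  · simp

theorem isBigO_rpow_half_div_of_tendsto_rpow_mul
    (h : Tendsto (fun t => t ^ γ * a t) atTop (𝓝 L)) (hL : L ≠ 0) {q : ℝ} (hq : 0 ≤ q) :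
    (fun t => a (t / 2) ^ q / a t) =O[atTop] fun t => t ^ (γ - γ * q) := by
  have hhalf : (fun t => a (t / 2)) =O[atTop] fun t => t ^ (-γ) := by
    refine ((isBigO_rpow_neg_of_tendsto_rpow_mul h).comp_tendsto
      (tendsto_id.atTop_div_const two_pos)).trans ?_
    refine (isBigO_const_mul_self ((2:ℝ) ^ γ) _ _).congr' ?_ .rfl
    filter_upwards [eventually_ge_atTop 0] with t ht
    rw [Function.comp_apply, id, div_rpow ht zero_le_two, rpow_neg (zero_le_two : (0:ℝ) ≤ 2),
      div_inv_eq_mul, mul_comm]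
  have hpow := hhalf.rpow hq ((eventually_ge_atTop 0).mono fun t ht => rpow_nonneg ht _)
  refine (hpow.mul (isBigO_inv_rpow_of_tendsto_rpow_mul h hL)).congr' ?_ ?_
  · simp [div_eq_mul_inv]
  · filter_upwards [eventually_gt_atTop 0] with t ht
    rw [← rpow_mul ht.le, ← rpow_add ht]
    ring_nf

theorem isLittleO_exp_neg_mul_mul_self_of_tendsto_rpow_mul
    (h : Tendsto (fun t => t ^ γ * a t) atTop (𝓝 L)) (hγ : γ < 1) (hL : 0 < L) {c : ℝ}
    (hc : 0 < c) (s : ℝ) :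
    (fun t => exp (-c * (a t * t))) =o[atTop] fun t => t ^ s := by
  refine IsBigO.trans_isLittleO (g := fun t => exp (-(c * (L / 2)) * t ^ (1 - γ))) ?_
    (isLittleO_exp_neg_mul_rpow_rpow (by positivity) (by linarith) s)
  refine .of_bound 1 ?_
  filter_upwards [eventually_gt_atTop 0, h.eventually_const_le (half_lt_self hL)] with t ht hL'
  have hsplit : a t * t = t ^ (1 - γ) * (t ^ γ * a t) := by
    rw [rpow_sub ht, rpow_one]
    field_simp
  simp only [norm_eq_abs, abs_exp, one_mul, exp_le_exp, hsplit]
  have := mul_le_mul_of_nonneg_left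
    (mul_le_mul_of_nonneg_left hL' (rpow_nonneg ht.le (1 - γ))) hc.le
  linarith

theorem eventually_pos_of_tendsto_rpow_mul (h : Tendsto (fun t => t ^ γ * a t) atTop (𝓝 L))
    (hL : 0 < L) : ∀ᶠ t in atTop, 0 < a t := by
  filter_upwards [eventually_gt_atTop 0, h.eventually_const_lt hL] with t ht hpos
  exact pos_of_mul_pos_right hpos (rpow_nonneg ht.le γ)

theorem isLittleO_mul_exp_neg_mul_mul_self_of_tendsto_rpow_mul
    (h : Tendsto (fun t => t ^ γ * a t) atTop (𝓝 L)) (hγ : γ < 1) (hL : 0 < L) {c : ℝ}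
    (hc : 0 < c) (s : ℝ) :
    (fun t => t * exp (-c * (a t * t))) =o[atTop] fun t => t ^ s := by
  refine ((isBigO_refl id atTop).mul_isLittleO
    (isLittleO_exp_neg_mul_mul_self_of_tendsto_rpow_mul h hγ hL hc (s - 1))).congr' .rfl ?_
  filter_upwards [eventually_gt_atTop 0] with t ht
  simp [rpow_sub_one ht.ne', mul_div_cancel₀ _ ht.ne']

end Asymptotics

theorem exists_le_mul_rpow_neg_of_isBigO {f : ℝ → ℝ} {r : ℝ} (hr : 0 ≤ r)
    (hO : f =O[atTop] fun t => t ^ (-r)) (hloc : ∀ T, BddAbove (f '' Icc 1 T)) :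
    ∃ C, 0 ≤ C ∧ ∀ t ≥ 1, f t ≤ C * t ^ (-r) := by
  obtain ⟨c, hc₀, hc⟩ := hO.exists_nonneg
  obtain ⟨T, hT⟩ := eventually_atTop.1 (hc.bound.and (eventually_ge_atTop 0))
  have hT₀ : 0 ≤ T := (hT T le_rfl).2
  obtain ⟨B, hB⟩ := hloc T
  refine ⟨c + max B 0 * T ^ r, by positivity, fun t ht => ?_⟩
  have ht₀ : 0 < t := by linarith
  have htr : 0 ≤ max B 0 * T ^ r * t ^ (-r) := by positivity
  rcases le_total T t with hTt | htT
  · have := (hT t hTt).1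
    rw [norm_eq_abs, norm_eq_abs, abs_of_nonneg (rpow_nonneg ht₀.le _)] at this
    nlinarith [le_abs_self (f t)]
  · have hTr : 1 ≤ T ^ r * t ^ (-r) := by
      rw [rpow_neg ht₀.le, ← div_eq_mul_inv, one_le_div (rpow_pos_of_pos ht₀ r)]
      exact rpow_le_rpow ht₀.le htT hr
    have hfB : f t ≤ B := hB ⟨t, ⟨ht, htT⟩, rfl⟩
    have := rpow_nonneg ht₀.le (-r)
    nlinarith [le_max_left B 0, le_max_right B 0]

section IntegralInequality

variable {a : ℝ → ℝ} {C₀ C₁ q x y t : ℝ}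

theorem le_add_mul_of_le_exp_neg_integral_add (ha_nonneg : ∀ t ≥ (0:ℝ), 0 ≤ a t)
    (ha_mono : AntitoneOn a (Ici 0)) (hC₀ : 0 ≤ C₀) (hC₁ : 0 ≤ C₁) (hq : 0 ≤ q) (hy : 0 ≤ y)
    (ht : 0 ≤ t)
    (h : x ≤ exp (-C₀ * ∫ s in 0..t, a s) * y +
      C₁ * ∫ s in 0..t, a s ^ q * exp (-C₀ * ∫ r in s..t, a r)) :
    x ≤ y + C₁ * (t * a 0 ^ q) := by
  have hexp : exp (-C₀ * ∫ s in 0..t, a s) ≤ 1 := by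
    have : 0 ≤ ∫ s in 0..t, a s :=
      intervalIntegral.integral_nonneg ht fun s hs => ha_nonneg s hs.1
    exact exp_le_one_iff.2 (by nlinarith)
  have hint := integral_rpow_mul_exp_neg_integral_le_head ha_nonneg ha_mono hC₀ hq ht le_rfl
  rw [intervalIntegral.integral_same, mul_zero, exp_zero, mul_one] at hint
  nlinarith [mul_le_mul_of_nonneg_left hint hC₁]

theorem le_exp_add_div_of_le_exp_neg_integral_add (ha_nonneg : ∀ t ≥ (0:ℝ), 0 ≤ a t)
    (ha_mono : AntitoneOn a (Ici 0)) (hC₀ : 0 < C₀) (hC₁ : 0 ≤ C₁) (hq : 0 ≤ q) (hy : 0 ≤ y)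
    (ht : 0 ≤ t) (hat : 0 < a t)
    (h : x ≤ exp (-C₀ * ∫ s in 0..t, a s) * y +
      C₁ * ∫ s in 0..t, a s ^ q * exp (-C₀ * ∫ r in s..t, a r)) :
    x ≤ y * exp (-(C₀ / 2) * (a t * t)) + C₁ * a 0 ^ q / 2 * (t * exp (-(C₀ / 2) * (a t * t))) +
      C₁ / C₀ * (a (t / 2) ^ q / a t) := by
  have hexp : exp (-C₀ * ∫ s in 0..t, a s) ≤ exp (-(C₀ / 2) * (a t * t)) := by
    have := (ha_mono.mono Icc_subset_Ici_self).mul_sub_le_intervalIntegral ht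
    exact exp_le_exp.2 (by nlinarith [mul_nonneg hat.le ht])
  have hint := integral_rpow_mul_exp_neg_integral_le ha_nonneg ha_mono hC₀ hq ht hat
  calc x ≤ exp (-(C₀ / 2) * (a t * t)) * y +
        C₁ * (t / 2 * a 0 ^ q * exp (-(C₀ / 2) * (a t * t)) + a (t / 2) ^ q / (C₀ * a t)) := by
        nlinarith [mul_le_mul_of_nonneg_left hint hC₁, mul_le_mul_of_nonneg_right hexp hy]
    _ = _ := by field_simp; ring

end IntegralInequality

theorem decay_rate_bound_general
    (γ : ℝ) (hγ : γ ∈ Set.Ioo (1/2 : ℝ) 1)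
    (a : ℝ → ℝ) (ha_nonneg : ∀ t ≥ (0:ℝ), 0 ≤ a t)
    (ha_mono : AntitoneOn a (Set.Ici (0:ℝ)))
    (L : ℝ) (hL : 0 < L)
    (ha_lim : Tendsto (fun t : ℝ => t ^ γ * a t) atTop (nhds L))
    (p : ℝ) (hp : 2 < p) (C₀ : ℝ) (hC₀ : 0 < C₀) (C₁ : ℝ) (hC₁ : 0 ≤ C₁)
    (f : ℝ → ℝ) (hf_nonneg : ∀ t ≥ (0:ℝ), 0 ≤ f t)
    (hf_ineq : ∀ t ≥ (0:ℝ),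
      f t ≤ Real.exp (-C₀ * ∫ s in (0:ℝ)..t, a s) * f 0 +
        C₁ * ∫ s in (0:ℝ)..t, (a s) ^ ((p + 2) / 2) * Real.exp (-C₀ * ∫ r in s..t, a r)) :
    (∃ C : ℝ, 0 ≤ C ∧ ∀ t ≥ (1:ℝ), f t ≤ C * t ^ (-(p * γ / 2))) ∧
      Tendsto f atTop (nhds 0) := by
  obtain ⟨hγ₀, hγ₁⟩ := hγ
  have hq : 0 ≤ (p + 2) / 2 := by linarith
  have hr : 0 < p * γ / 2 := by nlinarith
  have hf₀ := hf_nonneg 0 le_rfl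
  have hexp := isLittleO_exp_neg_mul_mul_self_of_tendsto_rpow_mul ha_lim hγ₁ hL (half_pos hC₀)
  have hratio := isBigO_rpow_half_div_of_tendsto_rpow_mul ha_lim hL.ne' hq
  rw [show γ - γ * ((p + 2) / 2) = -(p * γ / 2) by ring] at hratio
  have hmul_exp := isLittleO_mul_exp_neg_mul_mul_self_of_tendsto_rpow_mul ha_lim hγ₁ hL
    (half_pos hC₀) (-(p * γ / 2))
  have hO : f =O[atTop] fun t => t ^ (-(p * γ / 2)) := by
    refine (IsBigO.of_norm_eventuallyLE ?_).trans
      ((((hexp _).isBigO.const_mul_left (f 0)).add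
        (hmul_exp.isBigO.const_mul_left (C₁ * a 0 ^ ((p + 2) / 2) / 2))).add
        (hratio.const_mul_left (C₁ / C₀)))
    filter_upwards [eventually_ge_atTop 0, eventually_pos_of_tendsto_rpow_mul ha_lim hL]
      with t ht hat
    rw [norm_of_nonneg (hf_nonneg t ht)]
    exact le_exp_add_div_of_le_exp_neg_integral_add ha_nonneg ha_mono hC₀ hC₁ hq hf₀ ht hat
      (hf_ineq t ht)
  refine ⟨exists_le_mul_rpow_neg_of_isBigO hr.le hO
    fun T => ⟨f 0 + C₁ * (T * a 0 ^ ((p + 2) / 2)), ?_⟩,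
    hO.trans_tendsto (tendsto_rpow_neg_atTop hr)⟩
  rintro _ ⟨t, ⟨ht, htT⟩, rfl⟩
  refine (le_add_mul_of_le_exp_neg_integral_add ha_nonneg ha_mono hC₀.le hC₁ hq hf₀ (by linarith)
    (hf_ineq t (by linarith))).trans ?_
  gcongr
  exact rpow_nonneg (ha_nonneg 0 le_rfl) _

/-- Decay-rate step of Theorem 1: under Assumption 2, if
`f(t) ≤ e^(-C₀∫₀ᵗ a) f(0) + C₁ ∫₀ᵗ a(s)^((p+2)/2) e^(-C₀∫ₛᵗ a) ds` for all `t ≥ 0`,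
then `f(t) ≤ C t^(-pγ/2)` for `t ≥ 1` and `f(t) → 0`. -/
theorem decay_rate_bound
    (γ : ℝ) (hγ : γ ∈ Set.Ioo (1/2 : ℝ) 1)
    (a : ℝ → ℝ) (ha_nonneg : ∀ t ≥ (0:ℝ), 0 ≤ a t)
    (ha_bdd : ∃ M : ℝ, ∀ t ≥ (0:ℝ), a t ≤ M)
    (ha_mono : AntitoneOn a (Set.Ici (0:ℝ)))
    (ha_meas : Measurable a)
    (L : ℝ) (hL : 0 < L)
    (ha_lim : Tendsto (fun t : ℝ => t ^ γ * a t) atTop (nhds L))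
    (p : ℝ) (hp : 2 < p) (C₀ : ℝ) (hC₀ : 0 < C₀) (C₁ : ℝ) (hC₁ : 0 ≤ C₁)
    (f : ℝ → ℝ) (hf_nonneg : ∀ t ≥ (0:ℝ), 0 ≤ f t)
    (hf_ineq : ∀ t ≥ (0:ℝ),
      f t ≤ Real.exp (-C₀ * ∫ s in (0:ℝ)..t, a s) * f 0 +
        C₁ * ∫ s in (0:ℝ)..t, (a s) ^ ((p + 2) / 2) * Real.exp (-C₀ * ∫ r in s..t, a r)) :
    (∃ C : ℝ, 0 ≤ C ∧ ∀ t ≥ (1:ℝ), f t ≤ C * t ^ (-(p * γ / 2))) ∧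
      Tendsto f atTop (nhds 0) :=
  decay_rate_bound_general γ hγ a ha_nonneg ha_mono L hL ha_lim p hp C₀ hC₀ C₁ hC₁ f hf_nonneg
    hf_ineq
end
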